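/- Let f be a homeomorphism of a compact metric space (X,d) and let n be a positive integer. If f is positively n-expansive with positively n-expansive constant c and has the L-shadowing property, then there exists 0 < δ < c/2 such that for every x ∈ X there exists a set A(x) ⊆ B(x,δ) with at most n points such that distinct points of A(x) belong to different unstable sets (i.e., a ∉ W^u(a') for all distinct a, a' ∈ A(x)) and every point of B(x,δ) belongs to the unstable set W^u(a) of some point a ∈ A(x). -/
import Mathlib


open Metric Filter Set

variable {X : Type*} [MetricSpace X]

/-- The iterate of a homeomorphism by an integer power. -/
def hIter (f : X ≃ₜ X) (k : ℤ) (x : X) : X := (f.toEquiv ^ k) x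

/-- The local stable set of `x` of size `c`:
points whose forward iterates stay `c`-close to those of `x`. -/
def localStable (f : X ≃ₜ X) (c : ℝ) (x : X) : Set X :=
  {y | ∀ k : ℕ, dist ((⇑f)^[k] y) ((⇑f)^[k] x) ≤ c}

/-- The local unstable set of `x` of size `c`:
points whose backward iterates stay `c`-close to those of `x`. -/
def localUnstable (f : X ≃ₜ X) (c : ℝ) (x : X) : Set X :=
  {y | ∀ k : ℕ, dist ((⇑f.symm)^[k] y) ((⇑f.symm)^[k] x) ≤ c}

/-- The stable set of `x`. -/
def stableSet (f : X ≃ₜ X) (x : X) : Set X :=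
  {y | Tendsto (fun k : ℕ => dist ((⇑f)^[k] y) ((⇑f)^[k] x)) atTop (nhds 0)}

/-- The unstable set of `x`. -/
def unstableSet (f : X ≃ₜ X) (x : X) : Set X :=
  {y | Tendsto (fun k : ℕ => dist ((⇑f.symm)^[k] y) ((⇑f.symm)^[k] x)) atTop (nhds 0)}

/-- `f` is positively `n`-expansive: for some `c > 0` every local stable set of
size `c` contains at most `n` points. -/
def PosNExpansive (f : X ≃ₜ X) (n : ℕ) : Prop :=
  ∃ c > 0, ∀ x : X, ∀ S : Finset X, ↑S ⊆ localStable f c x → S.card ≤ n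

/-- `f` is `n`-expansive: for some `c > 0` every dynamical ball of size `c`
contains at most `n` points. -/
def NExpansive (f : X ≃ₜ X) (n : ℕ) : Prop :=
  ∃ c > 0, ∀ x : X, ∀ S : Finset X,
    ↑S ⊆ localStable f c x ∩ localUnstable f c x → S.card ≤ n

/-- `f` is expansive. -/
def Expansive (f : X ≃ₜ X) : Prop :=
  ∃ c > 0, ∀ x y : X, (∀ k : ℤ, dist (hIter f k x) (hIter f k y) ≤ c) → x = y

/-- `(x_k)_{k ∈ ℤ}` is a `δ`-pseudo-orbit. -/
def IsPseudoOrbit (f : X ≃ₜ X) (δ : ℝ) (x : ℤ → X) : Prop :=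
  ∀ k : ℤ, dist (f (x k)) (x (k + 1)) < δ

/-- `(x_k)_{k ∈ ℤ}` is a two-sided limit pseudo-orbit:
`d(f(x_k), x_{k+1}) → 0` as `|k| → ∞`. -/
def IsTwoSidedLimitPseudoOrbit (f : X ≃ₜ X) (x : ℤ → X) : Prop :=
  Tendsto (fun k : ℤ => dist (f (x k)) (x (k + 1))) cofinite (nhds 0)

/-- `z` `ε`-shadows the sequence `(x_k)_{k ∈ ℤ}`. -/
def Shadows (f : X ≃ₜ X) (ε : ℝ) (z : X) (x : ℤ → X) : Prop :=
  ∀ k : ℤ, dist (hIter f k z) (x k) < ε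

/-- `z` two-sided limit shadows `(x_k)_{k ∈ ℤ}`. -/
def TwoSidedLimitShadows (f : X ≃ₜ X) (z : X) (x : ℤ → X) : Prop :=
  Tendsto (fun k : ℤ => dist (hIter f k z) (x k)) cofinite (nhds 0)

/-- The shadowing property. -/
def ShadowingProperty (f : X ≃ₜ X) : Prop :=
  ∀ ε > 0, ∃ δ > 0, ∀ x : ℤ → X, IsPseudoOrbit f δ x → ∃ z : X, Shadows f ε z x

/-- The L-shadowing property. -/
def LShadowingProperty (f : X ≃ₜ X) : Prop :=
  ∀ ε > 0, ∃ δ > 0, ∀ x : ℤ → X, IsPseudoOrbit f δ x →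
    IsTwoSidedLimitPseudoOrbit f x →
    ∃ z : X, Shadows f ε z x ∧ TwoSidedLimitShadows f z x

/-- Topological transitivity. -/
def TopTransitive (f : X ≃ₜ X) : Prop :=
  ∀ U V : Set X, IsOpen U → IsOpen V → U.Nonempty → V.Nonempty →
    ∃ k : ℕ, ((⇑f)^[k] '' U ∩ V).Nonempty

/-- There is a nontrivial finite `ε`-pseudo-orbit from `x` to `y`. -/
def ChainFrom (f : X ≃ₜ X) (ε : ℝ) (x y : X) : Prop :=
  ∃ (l : ℕ) (c : ℕ → X), 0 < l ∧ c 0 = x ∧ c l = y ∧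
    ∀ k < l, dist (f (c k)) (c (k + 1)) < ε

/-- `x` is a chain recurrent point of `f`. -/
def ChainRecurrent (f : X ≃ₜ X) (x : X) : Prop :=
  ∀ ε > 0, ChainFrom f ε x x

/-- The chain recurrent class of `x`. -/
def chainClass (f : X ≃ₜ X) (x : X) : Set X :=
  {y | ∀ ε > 0, ChainFrom f ε x y ∧ ChainFrom f ε y x}

/-- `x` is a periodic point of `f`. -/
def Periodic (f : X ≃ₜ X) (x : X) : Prop :=
  ∃ k : ℕ, 1 ≤ k ∧ (⇑f)^[k] x = x

/-- `x` is a non-wandering point of `f`. -/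
def NonWandering (f : X ≃ₜ X) (x : X) : Prop :=
  ∀ U : Set X, IsOpen U → x ∈ U → ∃ k : ℕ, 0 < k ∧ ((⇑f)^[k] '' U ∩ U).Nonempty

/-- The omega limit set of `x`: accumulation points of the forward orbit. -/
def omegaLimitSet (f : X ≃ₜ X) (x : X) : Set X :=
  {y | ∃ φ : ℕ → ℕ, StrictMono φ ∧ Tendsto (fun n => (⇑f)^[φ n] x) atTop (nhds y)}

/-- `z` two-sided limit shadows `(x_k)` with gap `K`. -/
def TwoSidedLimitShadowsWithGap (f : X ≃ₜ X) (K : ℤ) (z : X) (x : ℤ → X) : Prop :=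
  Tendsto (fun k : ℤ => dist (hIter f k z) (x k)) atBot (nhds 0) ∧
  Tendsto (fun k : ℤ => dist (hIter f (K + k) z) (x k)) atTop (nhds 0)

lemma hIter_zero (f : X ≃ₜ X) (x : X) : hIter f 0 x = x := by simp [hIter]

lemma hIter_add_one (f : X ≃ₜ X) (k : ℤ) (x : X) : hIter f (k + 1) x = f (hIter f k x) := by
  unfold hIter
  rw [add_comm, zpow_add, zpow_one, Equiv.Perm.mul_apply]
  rfl

lemma hIter_sub_one (f : X ≃ₜ X) (k : ℤ) (x : X) : hIter f (k - 1) x = f.symm (hIter f k x) := by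
  have := hIter_add_one f (k - 1) x
  rw [sub_add_cancel] at this
  rw [this, Homeomorph.symm_apply_apply]

lemma hIter_natCast (f : X ≃ₜ X) (k : ℕ) (x : X) : hIter f (k : ℤ) x = (⇑f)^[k] x := by
  induction k with
  | zero => simp [hIter]
  | succ m ih =>
    have : ((m + 1 : ℕ) : ℤ) = (m : ℤ) + 1 := by push_cast; ring
    rw [this, hIter_add_one, ih, Function.iterate_succ_apply']

lemma hIter_neg_natCast (f : X ≃ₜ X) (k : ℕ) (x : X) :
    hIter f (-(k : ℤ)) x = (⇑f.symm)^[k] x := by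
  induction k with
  | zero => simp [hIter]
  | succ m ih =>
    have : (-((m + 1 : ℕ) : ℤ)) = -(m : ℤ) - 1 := by push_cast; ring
    rw [this, hIter_sub_one, ih, Function.iterate_succ_apply']

def unstableSetoid (f : X ≃ₜ X) : Setoid X where
  r a b := a ∈ unstableSet f b
  iseqv := by
    constructor
    · intro a
      simp only [unstableSet, Set.mem_setOf_eq, dist_self]
      exact tendsto_const_nhds
    · intro a b h
      simpa only [unstableSet, Set.mem_setOf_eq, dist_comm] using h
    · intro a b c h1 h2
      have h3 := h1.add h2
      rw [add_zero] at h3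
      exact squeeze_zero (fun k => dist_nonneg) (fun k => dist_triangle _ _ _) h3

lemma neg_natCast_tendsto_cofinite : Tendsto (fun k : ℕ => -(k : ℤ)) atTop cofinite := by
  rw [← Nat.cofinite_eq_atTop]
  exact Function.Injective.tendsto_cofinite (by intro a b h; simpa using h)

lemma key_lemma (f : X ≃ₜ X) {c δ0 : ℝ} (hδ0 : 0 < δ0)
    (hLs : ∀ p : ℤ → X, IsPseudoOrbit f δ0 p → IsTwoSidedLimitPseudoOrbit f p →
      ∃ z, Shadows f c z p ∧ TwoSidedLimitShadows f z p)
    (x y : X) (hxy : dist y x < δ0) :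
    ∃ z ∈ localStable f c x, y ∈ unstableSet f z := by
  classical
  set p : ℤ → X := fun k => if k < 0 then hIter f k y else hIter f k x with hp
  have hp_neg : ∀ k : ℤ, k < 0 → p k = hIter f k y := fun k hk => by
    simp only [hp, if_pos hk]
  have hp_nonneg : ∀ k : ℤ, ¬ k < 0 → p k = hIter f k x := fun k hk => by
    simp only [hp, if_neg hk]
  have hp_eq : ∀ k : ℤ, k ≠ -1 → f (p k) = p (k + 1) := by
    intro k hk
    by_cases h : k < 0
    · rw [hp_neg k h, hp_neg (k + 1) (by omega), hIter_add_one]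
    · rw [hp_nonneg k h, hp_nonneg (k + 1) (by omega), hIter_add_one]
  have hpo : IsPseudoOrbit f δ0 p := by
    intro k
    by_cases hk : k = -1
    · subst hk
      have h1 : p (-1) = hIter f (-1) y := hp_neg _ (by omega)
      have h2 : p ((-1) + 1) = x := by
        rw [show (-1 : ℤ) + 1 = 0 by ring, hp_nonneg 0 (by omega), hIter_zero]
      rw [h1, h2]
      have : f (hIter f (-1) y) = y := by
        rw [← hIter_add_one, show (-1 : ℤ) + 1 = 0 by ring, hIter_zero]
      rw [this]
      exact hxy
    · rw [hp_eq k hk, dist_self]; exact hδ0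
  have hzero : ∀ k : ℤ, k ≠ -1 → dist (f (p k)) (p (k + 1)) = 0 := by
    intro k hk; rw [hp_eq k hk, dist_self]
  have hev : (fun k : ℤ => dist (f (p k)) (p (k + 1))) =ᶠ[cofinite] (fun _ => (0 : ℝ)) := by
    rw [Filter.EventuallyEq, Filter.eventually_cofinite]
    apply Set.Finite.subset (Set.finite_singleton (-1 : ℤ))
    intro k hk
    simp only [Set.mem_singleton_iff]
    by_contra h
    exact hk (hzero k h)
  have hlpo : IsTwoSidedLimitPseudoOrbit f p := Filter.Tendsto.congr' hev.symm tendsto_const_nhds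
  obtain ⟨z, hz1, hz2⟩ := hLs p hpo hlpo
  refine ⟨z, ?_, ?_⟩
  · intro k
    have hk : ¬ ((k : ℤ) < 0) := by omega
    have := hz1 (k : ℤ)
    rw [hp_nonneg _ hk, hIter_natCast, hIter_natCast] at this
    exact this.le
  · have h2 := hz2.comp neg_natCast_tendsto_cofinite
    apply h2.congr'
    filter_upwards [eventually_ge_atTop 1] with k hk
    have hneg : (-(k : ℤ)) < 0 := by omega
    simp only [Function.comp_apply]
    rw [hp_neg _ hneg, hIter_neg_natCast, hIter_neg_natCast, dist_comm]

theorem stmt12 {X : Type*} [MetricSpace X] [CompactSpace X] (f : X ≃ₜ X) (n : ℕ)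
    (hn : 0 < n) (c : ℝ) (hc : 0 < c)
    (hexp : ∀ x : X, ∀ S : Finset X, ↑S ⊆ localStable f c x → S.card ≤ n)
    (hL : LShadowingProperty f) :
    ∃ δ : ℝ, 0 < δ ∧ δ < c / 2 ∧ ∀ x : X, ∃ A : Finset X,
      ↑A ⊆ ball x δ ∧ A.card ≤ n ∧
      (∀ a ∈ A, ∀ a' ∈ A, a ≠ a' → a ∉ unstableSet f a') ∧
      (∀ y ∈ ball x δ, ∃ a ∈ A, y ∈ unstableSet f a) := by
  classical
  obtain ⟨δ0, hδ0, hLs⟩ := hL c hc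
  refine ⟨min δ0 (c / 4), lt_min hδ0 (by linarith), (min_le_right _ _).trans_lt (by linarith), ?_⟩
  intro x
  set δ := min δ0 (c / 4) with hδ
  -- the local stable set is finite with at most n points
  have hfin : (localStable f c x).Finite := by
    by_contra h
    obtain ⟨S, hS, hcard⟩ := Set.Infinite.exists_subset_card_eq h (n + 1)
    have := hexp x S hS
    omega
  have hTcard : hfin.toFinset.card ≤ n := hexp x hfin.toFinset (by simp)
  -- key covering
  have hcov : ∀ y ∈ ball x δ, ∃ z ∈ localStable f c x, y ∈ unstableSet f z := by
    intro y hy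
    apply key_lemma f hδ0 hLs x y
    rw [mem_ball] at hy
    exact hy.trans_le (min_le_left _ _)
  -- quotient by the unstable equivalence relation
  let s : Setoid X := unstableSetoid f
  let q : X → Quotient s := Quotient.mk s
  let Q' : Finset (Quotient s) :=
    (hfin.toFinset.image q).filter (fun γ => ∃ y ∈ ball x δ, q y = γ)
  let w : Quotient s → X := fun γ =>
    if h : ∃ y ∈ ball x δ, q y = γ then h.choose else x
  have hw : ∀ γ ∈ Q', w γ ∈ ball x δ ∧ q (w γ) = γ := by
    intro γ hγ
    have h : ∃ y ∈ ball x δ, q y = γ := (Finset.mem_filter.mp hγ).2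
    simp only [w, dif_pos h]
    exact ⟨h.choose_spec.1, h.choose_spec.2⟩
  refine ⟨Q'.image w, ?_, ?_, ?_, ?_⟩
  · intro a ha
    obtain ⟨γ, hγ, rfl⟩ := Finset.mem_image.mp ha
    exact (hw γ hγ).1
  · calc (Q'.image w).card ≤ Q'.card := Finset.card_image_le
      _ ≤ (hfin.toFinset.image q).card := Finset.card_filter_le _ _
      _ ≤ hfin.toFinset.card := Finset.card_image_le
      _ ≤ n := hTcard
  · intro a ha a' ha' hne hmem
    obtain ⟨γ, hγ, rfl⟩ := Finset.mem_image.mp ha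
    obtain ⟨γ', hγ', rfl⟩ := Finset.mem_image.mp ha'
    have hq : q (w γ) = q (w γ') := Quotient.sound hmem
    rw [(hw γ hγ).2, (hw γ' hγ').2] at hq
    exact hne (by rw [hq])
  · intro y hy
    obtain ⟨z, hz, hyz⟩ := hcov y hy
    have hzT : z ∈ hfin.toFinset := hfin.mem_toFinset.mpr hz
    have hqyz : q y = q z := Quotient.sound hyz
    have hγQ : q z ∈ Q' := by
      refine Finset.mem_filter.mpr ⟨Finset.mem_image_of_mem q hzT, ⟨y, hy, hqyz⟩⟩
    refine ⟨w (q z), Finset.mem_image_of_mem w hγQ, ?_⟩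
    have heq : q y = q (w (q z)) := by rw [(hw _ hγQ).2, hqyz]
    exact Quotient.exact heq
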